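/- arXiv:0808.0313 — 4 statements merged into one kernel-verified Lean document; each statement's English description precedes it below -/
import Mathlib

section
/- Let D ⊂ ℂⁿ be a bounded domain such that for every boundary point a ∈ ∂D there exist a neighborhood U_a of a and a holomorphic function f_a on D ∩ U_a with lim_{z→a} |f_a(z)| = ∞. Then D is taut. -/
open Complex Filter Metric Set
open scoped Topology

/-!
A bounded sequence of holomorphic maps `𝔻 → ℂⁿ` has, by Montel's theorem (Arzelà–Ascoli with
the Schwarz–Cauchy estimates), a subsequence converging locally uniformly to a holomorphic
`ψ : 𝔻 → closure D`. Where `ψ` lands in `D` is open; where it lands on `∂D` is open too: if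
`ψ z₀ = a ∈ ∂D`, near `z₀` the maps `φ j` eventually land where `|f_a| ≥ 1`, so the reciprocals
`1 / (f_a ∘ φ j)` are bounded and zero-free, and a limit of them vanishes at `z₀`. By Hurwitz's
theorem that limit vanishes identically, which is impossible at a point `z` with `ψ z ∈ D`, where
it equals `1 / f_a (ψ z)`. As `𝔻` is connected, either `ψ(𝔻) ⊆ D`, or `ψ(𝔻) ⊆ ∂D` and uniform
convergence on compacta makes the subsequence compactly divergent.
-/

theorem ContinuousMap.isCompact_closure_range_of_equicontinuous {ι X α : Type*}
    [TopologicalSpace X] [CompactlyCoherentSpace X] [UniformSpace α] [T2Space α]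
    {F : ι → C(X, α)} (hF : Equicontinuous fun i ↦ ⇑(F i))
    (hpt : ∀ x, ∃ Q, IsCompact Q ∧ ∀ i, F i x ∈ Q) :
    IsCompact (closure (range F)) := by
  refine ArzelaAscoli.isCompact_closure_of_isClosedEmbedding (𝔖 := {K | IsCompact K})
    (fun _ hK ↦ hK) ⟨isUniformEmbedding_toUniformOnFunIsCompact.isEmbedding, ?_⟩
    (fun K _ ↦ Equicontinuous.equicontinuousOn ?_ K) ?_
  · exact range_toUniformOnFunIsCompact (α := X) (β := α) ▸
      UniformOnFun.isClosed_setOfPred_continuous CompactlyCoherentSpace.isCoherentWith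
  · intro x
    simpa [EquicontinuousAt, forall_subtype_range_iff] using hF x
  · rintro _ _ x _
    obtain ⟨Q, hQ, hFQ⟩ := hpt x
    exact ⟨Q, hQ, forall_mem_range.mpr hFQ⟩

theorem equicontinuous_domRestrict_of_differentiableOn_of_norm_le {ι E V : Type*}
    [NormedAddCommGroup E] [NormedSpace ℂ E] [NormedAddCommGroup V] [NormedSpace ℂ V]
    {U : Set E} (hU : IsOpen U) {g : ι → E → V} {M : ℝ}
    (hd : ∀ i, DifferentiableOn ℂ (g i) U) (hM : ∀ i, ∀ z ∈ U, ‖g i z‖ ≤ M) :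
    Equicontinuous fun i ↦ U.domRestrict (g i) := by
  intro x
  obtain ⟨r, hr, hrU⟩ := Metric.isOpen_iff.mp hU x x.2
  -- the modulus is the Schwarz lemma bound on `ball x r`
  refine equicontinuousAt_of_continuity_modulus (fun y : U ↦ 2 * M / r * dist (y : E) x)
    ?_ _ ?_
  · have := ((continuous_subtype_val.dist (continuous_const (y := (x : E)))).tendsto x).const_mul
      (2 * M / r)
    simpa using this
  · have hball : ∀ᶠ y : U in 𝓝 x, (y : E) ∈ ball (x : E) r :=
      continuous_subtype_val.continuousAt.preimage_mem_nhds (ball_mem_nhds _ hr)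
    filter_upwards [hball] with y hy i
    have hmaps : MapsTo (g i) (ball (x : E) r) (closedBall (g i x) (2 * M)) := fun z hz ↦
      mem_closedBall.mpr <| (dist_le_norm_add_norm _ _).trans <| by
        linarith [hM i z (hrU hz), hM i x x.2]
    rw [dist_comm]
    exact dist_le_div_mul_dist_of_mapsTo_ball ((hd i).mono hrU) hmaps hy

theorem exists_tendstoLocallyUniformlyOn_subseq_of_norm_le {V : Type*} [NormedAddCommGroup V]
    [NormedSpace ℂ V] [ProperSpace V] {U : Set ℂ} (hU : IsOpen U) {g : ℕ → ℂ → V} {M : ℝ}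
    (hd : ∀ j, DifferentiableOn ℂ (g j) U) (hM : ∀ j, ∀ z ∈ U, ‖g j z‖ ≤ M) :
    ∃ σ : ℕ → ℕ, StrictMono σ ∧ ∃ h : ℂ → V,
      TendstoLocallyUniformlyOn (fun j ↦ g (σ j)) h atTop U := by
  have : LocallyCompactSpace U := hU.locallyCompactSpace
  let F : ℕ → C(U, V) := fun j ↦ ⟨U.domRestrict (g j), (hd j).continuousOn.domRestrict⟩
  have hcompact : IsCompact (closure (range F)) :=
    ContinuousMap.isCompact_closure_range_of_equicontinuous
      (equicontinuous_domRestrict_of_differentiableOn_of_norm_le hU hd hM)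
      fun x ↦ ⟨closedBall 0 M, isCompact_closedBall 0 M,
        fun j ↦ mem_closedBall_zero_iff.mpr (hM j x x.2)⟩
  obtain ⟨u, -, σ, hσ, hu⟩ := hcompact.isSeqCompact fun j ↦ subset_closure (mem_range_self j)
  refine ⟨σ, hσ, Function.extend Subtype.val u 0, ?_⟩
  rw [tendstoLocallyUniformlyOn_iff_tendstoLocallyUniformly_comp_coe,
    Function.extend_comp Subtype.val_injective]
  exact ContinuousMap.tendsto_iff_tendstoLocallyUniformly.mp hu

theorem le_norm_of_forall_mem_frontier_le_norm {E : Type*} [NormedAddCommGroup E]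
    [NormedSpace ℂ E] [Nontrivial E] {f : E → ℂ} {U : Set E} (hU : Bornology.IsBounded U)
    (hd : DiffContOnCl ℂ f U) (hne : ∀ z ∈ closure U, f z ≠ 0) {C : ℝ}
    (hC : ∀ z ∈ frontier U, C ≤ ‖f z‖) {z : E} (hz : z ∈ closure U) : C ≤ ‖f z‖ := by
  rcases le_or_gt C 0 with hC0 | hC0
  · exact hC0.trans (norm_nonneg _)
  have hinv : ‖f⁻¹ z‖ ≤ C⁻¹ :=
    Complex.norm_le_of_forall_mem_frontier_norm_le hU (hd.inv hne)
      (fun w hw ↦ by simpa only [Pi.inv_apply, norm_inv] using inv_anti₀ hC0 (hC w hw)) hz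
  rw [Pi.inv_apply, norm_inv] at hinv
  exact (inv_le_inv₀ (norm_pos_iff.mpr (hne z hz)) hC0).mp hinv

theorem exists_closedBall_subset_forall_mem_sphere {X : Type*} [MetricSpace X] {x : X}
    {U : Set X} {p : X → Prop} (hp : ∀ᶠ y in 𝓝[≠] x, p y) (hU : U ∈ 𝓝 x) :
    ∃ ρ > 0, closedBall x ρ ⊆ U ∧ ∀ y ∈ sphere x ρ, p y := by
  obtain ⟨ε, hε, hεU⟩ := Metric.eventually_nhds_iff_ball.mp
    ((eventually_nhdsWithin_iff.mp hp).and hU)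
  have hsub : closedBall x (ε / 2) ⊆ ball x ε := closedBall_subset_ball (half_lt_self hε)
  refine ⟨ε / 2, half_pos hε, fun y hy ↦ (hεU y (hsub hy)).2, fun y hy ↦ ?_⟩
  exact (hεU y (hsub (sphere_subset_closedBall hy))).1 (ne_of_mem_sphere hy (half_pos hε).ne')

theorem eqOn_zero_of_tendstoLocallyUniformlyOn_of_ne_zero {ι : Type*} {l : Filter ι} [l.NeBot]
    {g : ι → ℂ → ℂ} {G : ℂ → ℂ} {U : Set ℂ} (hU : IsOpen U) (hUc : IsPreconnected U)
    (hd : ∀ i, DifferentiableOn ℂ (g i) U) (hne : ∀ i, ∀ z ∈ U, g i z ≠ 0)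
    (hG : TendstoLocallyUniformlyOn g G l U) {z₀ : ℂ} (hz₀ : z₀ ∈ U) (hG₀ : G z₀ = 0) :
    EqOn G 0 U := by
  have hGd : DifferentiableOn ℂ G U := hG.differentiableOn (.of_forall hd) hU
  refine (hGd.analyticOnNhd hU).eqOn_zero_of_preconnected_of_eventuallyEq_zero hUc hz₀ ?_
  by_contra hnot
  have hisol : ∀ᶠ z in 𝓝[≠] z₀, G z ≠ 0 :=
    ((hGd.analyticOnNhd hU) z₀ hz₀).eventually_eq_zero_or_eventually_ne_zero.resolve_left hnot
  obtain ⟨ρ, hρ, hρU, hsphere⟩ := exists_closedBall_subset_forall_mem_sphere hisol (hU.mem_nhds hz₀)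
  obtain ⟨ζ, hζ, hζmin⟩ := (isCompact_sphere z₀ ρ).exists_isMinOn
    (NormedSpace.sphere_nonempty.mpr hρ.le)
    (hGd.continuousOn.mono (sphere_subset_closedBall.trans hρU)).norm
  have hd₀ : 0 < ‖G ζ‖ := norm_pos_iff.mpr (hsphere ζ hζ)
  obtain ⟨i, hi⟩ := (Metric.tendstoUniformlyOn_iff.mp
    ((tendstoLocallyUniformlyOn_iff_forall_isCompact hU).mp hG _ hρU (isCompact_closedBall _ _))
    (‖G ζ‖ / 2) (half_pos hd₀)).exists
  have hcentre : ‖G ζ‖ / 2 ≤ ‖g i z₀‖ := by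
    refine le_norm_of_forall_mem_frontier_le_norm isBounded_ball
      (((hd i).mono (closure_ball z₀ hρ.ne' ▸ hρU)).diffContOnCl)
      (fun z hz ↦ hne i z ((closure_ball z₀ hρ.ne' ▸ hρU) hz)) (fun z hz ↦ ?_)
      (subset_closure (mem_ball_self hρ))
    rw [frontier_ball z₀ hρ.ne'] at hz
    have hGz : ‖G ζ‖ ≤ ‖G z‖ := hζmin hz
    have hclose := hi z (sphere_subset_closedBall hz)
    rw [dist_eq_norm] at hclose
    linarith [norm_sub_norm_le (G z) (g i z)]
  have := hi z₀ (mem_closedBall_self hρ.le)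
  rw [hG₀, dist_zero_left] at this
  linarith

theorem not_tendsto_nhds_of_tendsto_norm_atTop {h : ℕ → ℂ → ℂ} {W : Set ℂ} (hW : IsOpen W)
    (hWc : IsPreconnected W) (hd : ∀ j, DifferentiableOn ℂ (h j) W)
    (hge : ∀ j, ∀ z ∈ W, 1 ≤ ‖h j z‖) {z₀ z₁ : ℂ} (hz₀ : z₀ ∈ W) (hz₁ : z₁ ∈ W)
    (htop : Tendsto (fun j ↦ ‖h j z₀‖) atTop atTop) (w : ℂ) :
    ¬Tendsto (fun j ↦ h j z₁) atTop (𝓝 w) := by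
  intro hw
  have hne : ∀ j, ∀ z ∈ W, h j z ≠ 0 := fun j z hz ↦
    norm_pos_iff.mp (one_pos.trans_le (hge j z hz))
  have hw₀ : w ≠ 0 := norm_pos_iff.mp <| one_pos.trans_le <|
    ge_of_tendsto hw.norm (.of_forall fun j ↦ hge j z₁ hz₁)
  obtain ⟨τ, hτ, G, hG⟩ := exists_tendstoLocallyUniformlyOn_subseq_of_norm_le hW
    (g := fun j z ↦ (h j z)⁻¹) (M := 1) (fun j ↦ (hd j).inv (hne j))
    (fun j z hz ↦ by simpa only [norm_inv] using inv_le_one_of_one_le₀ (hge j z hz))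
  have hG₀ : G z₀ = 0 := by
    refine tendsto_nhds_unique (hG.tendsto_at hz₀) ?_
    rw [tendsto_zero_iff_norm_tendsto_zero]
    simp only [norm_inv]
    exact (htop.comp hτ.tendsto_atTop).inv_tendsto_atTop
  have hG₁ : G z₁ = w⁻¹ :=
    tendsto_nhds_unique (hG.tendsto_at hz₁) ((hw.comp hτ.tendsto_atTop).inv₀ hw₀)
  have := eqOn_zero_of_tendstoLocallyUniformlyOn_of_ne_zero hW hWc
    (fun j ↦ (hd (τ j)).inv (hne (τ j))) (fun j z hz ↦ inv_ne_zero (hne (τ j) z hz)) hG hz₀ hG₀ hz₁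
  exact inv_ne_zero hw₀ (hG₁ ▸ this)

theorem eventually_notMem_of_tendsto_norm_atTop {E : Type*} [NormedAddCommGroup E]
    [NormedSpace ℂ E] {D U : Set E} {a : E} (hD : IsOpen D) (hU : U ∈ 𝓝 a) {f : E → ℂ}
    (hf : DifferentiableOn ℂ f (D ∩ U)) (hfa : Tendsto (fun z ↦ ‖f z‖) (𝓝[D ∩ U] a) atTop)
    {V : Set ℂ} (hV : IsOpen V) {φ : ℕ → ℂ → E} {ψ : ℂ → E}
    (hφd : ∀ j, DifferentiableOn ℂ (φ j) V) (hφD : ∀ j, MapsTo (φ j) V D)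
    (hφψ : TendstoLocallyUniformlyOn φ ψ atTop V) {z₀ : ℂ} (hz₀ : z₀ ∈ V) (hψz₀ : ψ z₀ = a) :
    ∀ᶠ z in 𝓝 z₀, ψ z ∉ D := by
  subst hψz₀
  obtain ⟨ε, hε, hεU⟩ := Metric.eventually_nhds_iff_ball.mp
    ((eventually_nhdsWithin_iff.mp (hfa.eventually_ge_atTop 1)).and hU)
  have hΩ : ∀ y ∈ D ∩ ball (ψ z₀) ε, y ∈ D ∩ U ∧ 1 ≤ ‖f y‖ := fun y hy ↦
    have hyU : y ∈ D ∩ U := ⟨hy.1, (hεU y hy.2).2⟩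
    ⟨hyU, (hεU y hy.2).1 hyU⟩
  obtain ⟨t, ht, htφ⟩ := Metric.tendstoLocallyUniformlyOn_iff.mp hφψ (ε / 2) (half_pos hε) z₀ hz₀
  have hψc : ContinuousAt ψ z₀ :=
    (hφψ.continuousOn (.of_forall fun j ↦ (hφd j).continuousOn)).continuousAt (hV.mem_nhds hz₀)
  have hnear : ∀ᶠ z in 𝓝 z₀, z ∈ V ∧ z ∈ t ∧ ψ z ∈ ball (ψ z₀) (ε / 2) := by
    rw [nhdsWithin_eq_nhds.mpr (hV.mem_nhds hz₀)] at ht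
    filter_upwards [hV.mem_nhds hz₀, ht,
      hψc.preimage_mem_nhds (ball_mem_nhds _ (half_pos hε))] with z hzV hzt hzψ
    exact ⟨hzV, hzt, hzψ⟩
  obtain ⟨r, hr, hrnear⟩ := Metric.eventually_nhds_iff_ball.mp hnear
  obtain ⟨N, hN⟩ := eventually_atTop.mp htφ
  have hmaps : ∀ j, MapsTo (φ (j + N)) (ball z₀ r) (D ∩ ball (ψ z₀) ε) := fun j z hz ↦
    ⟨hφD _ (hrnear z hz).1, mem_ball.mpr <| (dist_triangle_left _ _ (ψ z)).trans_lt <| by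
      linarith [hN (j + N) (Nat.le_add_left N j) z (hrnear z hz).2.1,
        mem_ball.mp (hrnear z hz).2.2]⟩
  filter_upwards [ball_mem_nhds z₀ hr] with z hz hzD
  have hψz : ψ z ∈ D ∩ ball (ψ z₀) ε :=
    ⟨hzD, ball_subset_ball (half_le_self hε.le) (hrnear z hz).2.2⟩
  have hshift : Tendsto (· + N) atTop atTop := tendsto_add_atTop_nat N
  refine not_tendsto_nhds_of_tendsto_norm_atTop (h := fun j ζ ↦ f (φ (j + N) ζ)) isOpen_ball
    (convex_ball z₀ r).isPreconnected
    (fun j ↦ hf.comp ((hφd _).mono fun ζ hζ ↦ (hrnear ζ hζ).1) fun ζ hζ ↦ (hΩ _ (hmaps j hζ)).1)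
    (fun j ζ hζ ↦ (hΩ _ (hmaps j hζ)).2) (mem_ball_self hr) hz ?_ (f (ψ z)) ?_
  · refine hfa.comp (tendsto_nhdsWithin_iff.mpr ⟨?_, .of_forall fun j ↦ ?_⟩)
    · exact (hφψ.tendsto_at hz₀).comp hshift
    · exact (hΩ _ (hmaps j (mem_ball_self hr))).1
  · have hfc : ContinuousAt f (ψ z) := (hf.differentiableAt <|
      mem_of_superset ((hD.inter isOpen_ball).mem_nhds hψz) fun y hy ↦ (hΩ y hy).1).continuousAt
    exact hfc.tendsto.comp ((hφψ.tendsto_at (hrnear z hz).1).comp hshift)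

theorem IsPreconnected.forall_notMem_of_eventually_notMem {X Y : Type*} [TopologicalSpace X]
    [TopologicalSpace Y] {V : Set X} (hV : IsOpen V) (hVc : IsPreconnected V) {ψ : X → Y}
    (hψ : ContinuousOn ψ V) {D : Set Y} (hD : IsOpen D)
    (hloc : ∀ z ∈ V, ψ z ∉ D → ∀ᶠ w in 𝓝 z, ψ w ∉ D) {z₀ : X} (hz₀ : z₀ ∈ V)
    (hz₀D : ψ z₀ ∉ D) : ∀ z ∈ V, ψ z ∉ D := by
  have hsub := hVc.subset_left_of_subset_union (isOpen_setOfPred_eventually_nhds (p := (ψ · ∉ D)))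
    (hψ.isOpen_inter_preimage hV hD)
    (disjoint_left.mpr fun z hz hz' ↦ hz.self_of_nhds hz'.2)
    (fun z hz ↦ (em (ψ z ∈ D)).elim (fun h ↦ .inr ⟨hz, h⟩) fun h ↦ .inl (hloc z hz h))
    ⟨z₀, hz₀, hloc z₀ hz₀ hz₀D⟩
  exact fun z hz ↦ (hsub hz).self_of_nhds

theorem TendstoUniformlyOn.eventually_forall_notMem {ι β α : Type*} [TopologicalSpace β]
    [MetricSpace α] {F : ι → β → α} {f : β → α} {l : Filter ι} {K : Set β} {L : Set α}
    (hF : TendstoUniformlyOn F f l K) (hK : IsCompact K) (hf : ContinuousOn f K)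
    (hL : IsCompact L) (hfL : ∀ x ∈ K, f x ∉ L) : ∀ᶠ i in l, ∀ x ∈ K, F i x ∉ L := by
  obtain ⟨δ, hδ, hthick⟩ := (hK.image_of_continuousOn hf).exists_thickening_subset_open
    hL.isClosed.isOpen_compl (image_subset_iff.mpr hfL)
  filter_upwards [Metric.tendstoUniformlyOn_iff.mp hF δ hδ] with i hi x hx hxL
  exact hthick (mem_thickening_iff.mpr
    ⟨f x, mem_image_of_mem f hx, (dist_comm _ _).trans_lt (hi x hx)⟩) hxL

/-- Let `D ⊆ ℂⁿ` be a bounded domain such that every boundary point `a` has a neighborhood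
`U_a` and a holomorphic function `f_a` on `D ∩ U_a` with `lim_{z → a} |f_a(z)| = ∞`. Then `D`
is taut: every sequence of holomorphic maps `𝔻 → D` admits a subsequence that either converges
locally uniformly on `𝔻` to a holomorphic map `𝔻 → D`, or is compactly divergent. -/
theorem taut_of_local_holomorphic_exhaustion
    {n : ℕ} (D : Set (EuclideanSpace ℂ (Fin n)))
    (hD : IsOpen D ∧ IsConnected D) (hbd : Bornology.IsBounded D)
    (h : ∀ a ∈ frontier D, ∃ U : Set (EuclideanSpace ℂ (Fin n)), IsOpen U ∧ a ∈ U ∧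
      ∃ f : EuclideanSpace ℂ (Fin n) → ℂ, DifferentiableOn ℂ f (D ∩ U) ∧
        Filter.Tendsto (fun z => ‖f z‖) (𝓝[D ∩ U] a) atTop) :
    ∀ φ : ℕ → ℂ → EuclideanSpace ℂ (Fin n),
      (∀ j, DifferentiableOn ℂ (φ j) (ball (0 : ℂ) 1) ∧
        MapsTo (φ j) (ball (0 : ℂ) 1) D) →
      ∃ σ : ℕ → ℕ, StrictMono σ ∧
        ((∃ ψ : ℂ → EuclideanSpace ℂ (Fin n),
            DifferentiableOn ℂ ψ (ball (0 : ℂ) 1) ∧ MapsTo ψ (ball (0 : ℂ) 1) D ∧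
            TendstoLocallyUniformlyOn (fun j => φ (σ j)) ψ atTop (ball (0 : ℂ) 1)) ∨
          (∀ K : Set ℂ, K ⊆ ball (0 : ℂ) 1 → IsCompact K →
            ∀ L : Set (EuclideanSpace ℂ (Fin n)), L ⊆ D → IsCompact L →
              ∀ᶠ j in atTop, ∀ x ∈ K, φ (σ j) x ∉ L)) := by
  intro φ hφ
  obtain ⟨M, hM⟩ := isBounded_iff_forall_norm_le.mp hbd
  obtain ⟨σ, hσ, ψ, hψ⟩ := exists_tendstoLocallyUniformlyOn_subseq_of_norm_le isOpen_ball
    (fun j ↦ (hφ j).1) fun j z hz ↦ hM _ ((hφ j).2 hz)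
  have hψd : DifferentiableOn ℂ ψ (ball 0 1) :=
    hψ.differentiableOn (.of_forall fun j ↦ (hφ (σ j)).1) isOpen_ball
  refine ⟨σ, hσ, ?_⟩
  by_cases hψD : MapsTo ψ (ball 0 1) D
  · exact .inl ⟨ψ, hψd, hψD, hψ⟩
  obtain ⟨z₀, hz₀, hz₀D⟩ := not_forall₂.mp hψD
  have hout : ∀ z ∈ ball (0 : ℂ) 1, ψ z ∉ D := by
    refine (convex_ball 0 1).isPreconnected.forall_notMem_of_eventually_notMem isOpen_ball
      hψd.continuousOn hD.1 (fun z hz hzD ↦ ?_) hz₀ hz₀D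
    have hfr : ψ z ∈ frontier D := by
      rw [frontier, hD.1.interior_eq]
      exact ⟨mem_closure_of_tendsto (hψ.tendsto_at hz) (.of_forall fun j ↦ (hφ (σ j)).2 hz), hzD⟩
    obtain ⟨U, hU, hzU, f, hf, hfz⟩ := h _ hfr
    exact eventually_notMem_of_tendsto_norm_atTop hD.1 (hU.mem_nhds hzU) hf hfz isOpen_ball
      (fun j ↦ (hφ (σ j)).1) (fun j ↦ (hφ (σ j)).2) hψ hz rfl
  refine .inr fun K hK hKc L hLD hLc ↦ ?_
  exact ((tendstoLocallyUniformlyOn_iff_forall_isCompact isOpen_ball).mp hψ K hK hKc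
    ).eventually_forall_notMem hKc (hψd.continuousOn.mono hK) hLc
    fun x hx hxL ↦ hout x (hK hx) (hLD hxL)
end

section
/- Let D ⊂ ℂⁿ be a bounded domain such that for every boundary point a ∈ ∂D there exist a neighborhood U_a of a and a holomorphic function f_a on D ∩ U_a with lim_{z→a} |f_a(z)| = ∞. If ψ_j : 𝔻 → D are holomorphic maps converging locally uniformly on 𝔻 to a map ψ : 𝔻 → ℂⁿ, and ψ(ζ) ∈ ∂D for some ζ ∈ 𝔻, then ψ(𝔻) ⊂ ∂D. -/
open Complex Filter Metric Set
open scoped Topology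

/-!
Let `a = ψ(ξ₀) ∈ ∂D` and let `f` blow up at `a`. On a small disc `Δ` around `ξ₀`, for large `j`,
the maps `ψ_j` send `Δ` into the region where `|f| ≥ 1`, so `log |f ∘ ψ_j|` is a nonnegative
harmonic function on `Δ`. Harnack's inequality bounds it from below on a smaller disc by a fixed
multiple of its value at `ξ₀`, which tends to `∞`. Hence `|f(ψ_j(η))| → ∞` for every `η` near
`ξ₀`, which is impossible if `ψ(η) ∈ D`. So the set of points of `𝔻` that `ψ` maps to `∂D` is
open; it is also relatively closed and nonempty, hence all of `𝔻`.
-/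

namespace InnerProductSpace

theorem HarmonicOnNhd.mul_le_of_nonneg_on_sphere {f : ℂ → ℝ} {c w : ℂ} {R : ℝ}
    (hf : HarmonicOnNhd f (closedBall c R)) (hf₀ : ∀ z ∈ sphere c R, 0 ≤ f z)
    (hw : w ∈ ball c R) :
    (R - ‖w - c‖) / (R + ‖w - c‖) * f c ≤ f w := by
  have hR : |R| = R := abs_of_pos (pos_of_mem_ball hw)
  rw [← hR] at hf hf₀
  have hfc : ContinuousOn f (sphere c |R|) := hf.continuousOn.mono sphere_subset_closedBall
  have hP : ContinuousOn (poissonKernel c w) (sphere c |R|) := by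
    rw [poissonKernel_eq_re_herglotzRieszKernel]
    exact continuous_re.comp_continuousOn (continuousOn_herglotzRieszKernel_sphere hw)
  calc (R - ‖w - c‖) / (R + ‖w - c‖) * f c
      = Real.circleAverage (((R - ‖w - c‖) / (R + ‖w - c‖)) • f) c R := by
        rw [Real.circleAverage_smul, hf.circleAverage_eq, smul_eq_mul]
    _ ≤ Real.circleAverage (poissonKernel c w • f) c R := by
        refine Real.circleAverage_mono (continuousOn_const.smul hfc).circleIntegrable'
          (hP.smul hfc).circleIntegrable' fun z hz => ?_
        refine mul_le_mul_of_nonneg_right ?_ (hf₀ z hz)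
        rw [poissonKernel_eq_re_herglotzRieszKernel]
        exact le_re_herglotzRieszKernel (hR ▸ hz) hw
    _ = f w := (hR ▸ hf).circleAverage_poissonKernel_smul hw

end InnerProductSpace

theorem AnalyticOnNhd.mul_log_norm_le_log_norm {F : ℂ → ℂ} {c w : ℂ} {R : ℝ}
    (hF : AnalyticOnNhd ℂ F (closedBall c R)) (hF₀ : ∀ z ∈ closedBall c R, F z ≠ 0)
    (hF₁ : ∀ z ∈ sphere c R, 1 ≤ ‖F z‖) (hw : w ∈ ball c R) :
    (R - ‖w - c‖) / (R + ‖w - c‖) * Real.log ‖F c‖ ≤ Real.log ‖F w‖ :=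
  InnerProductSpace.HarmonicOnNhd.mul_le_of_nonneg_on_sphere
    (fun z hz => (hF z hz).harmonicAt_log_norm (hF₀ z hz))
    (fun z hz => Real.log_nonneg (hF₁ z hz)) hw

theorem tendsto_norm_atTop_of_mem_ball {ι : Type*} {l : Filter ι} {F : ι → ℂ → ℂ} {c w : ℂ}
    {R : ℝ} (hF : ∀ᶠ j in l, AnalyticOnNhd ℂ (F j) (closedBall c R) ∧
      ∀ z ∈ closedBall c R, 1 ≤ ‖F j z‖)
    (hc : Tendsto (fun j => ‖F j c‖) l atTop) (hw : w ∈ ball c R) :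
    Tendsto (fun j => ‖F j w‖) l atTop := by
  have hk : 0 < (R - ‖w - c‖) / (R + ‖w - c‖) := by
    have := mem_ball_iff_norm.1 hw
    exact div_pos (by linarith) (by linarith [norm_nonneg (w - c)])
  refine tendsto_atTop_mono' l ?_ ((Real.tendsto_log_atTop.comp hc).const_mul_atTop hk)
  filter_upwards [hF] with j ⟨hFa, hF₁⟩
  calc _ ≤ Real.log ‖F j w‖ :=
        hFa.mul_log_norm_le_log_norm (fun z hz => norm_pos_iff.1 (one_pos.trans_le (hF₁ z hz)))
          (fun z hz => hF₁ z (sphere_subset_closedBall hz)) hw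
    _ ≤ ‖F j w‖ := Real.log_le_self (norm_nonneg _)

theorem TendstoUniformlyOn.eventually_mapsTo {α β ι : Type*} [UniformSpace β] {F : ι → α → β}
    {f : α → β} {l : Filter ι} {K : Set α} {W : Set β} (hF : TendstoUniformlyOn F f l K)
    (hK : IsCompact (f '' K)) (hW : IsOpen W) (hfW : MapsTo f K W) :
    ∀ᶠ j in l, MapsTo (F j) K W := by
  obtain ⟨V, hV, -, hVW⟩ := lebesgue_number_of_compact_open hK hW hfW.image_subset
  filter_upwards [hF V hV] with j hj x hx
  exact hVW (f x) (mem_image_of_mem f hx) (hj x hx)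

theorem IsPreconnected.mapsTo_of_eventually_mem {X Y : Type*} [TopologicalSpace X]
    [TopologicalSpace Y] {s : Set X} {C : Set Y} {φ : X → Y} (hs : IsPreconnected s)
    (hso : IsOpen s) (hφ : ContinuousOn φ s) (hC : IsClosed C)
    (hloc : ∀ x ∈ s, φ x ∈ C → ∀ᶠ y in 𝓝 x, φ y ∈ C) {x₀ : X} (hx₀ : x₀ ∈ s)
    (hφx₀ : φ x₀ ∈ C) : MapsTo φ s C := by
  have hsub : s ⊆ {x | ∀ᶠ y in 𝓝 x, φ y ∈ C} := by
    refine hs.subset_of_closure_inter_subset isOpen_setOfPred_eventually_nhds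
      ⟨x₀, hx₀, hloc x₀ hx₀ hφx₀⟩ fun x ⟨hxu, hxs⟩ => hloc x hxs ?_
    refine hC.closure_subset_iff.2 ?_ (mem_closure_image (hφ.continuousAt (hso.mem_nhds hxs)) hxu)
    rintro _ ⟨y, hy, rfl⟩
    exact hy.self_of_nhds
  exact fun x hx => (hsub hx).self_of_nhds

section BlowUp

variable {E : Type*} [NormedAddCommGroup E] [NormedSpace ℂ E]

def HasHolomorphicBlowUpAt (D : Set E) (a : E) : Prop :=
  ∃ U : Set E, IsOpen U ∧ a ∈ U ∧ ∃ f : E → ℂ, DifferentiableOn ℂ f (D ∩ U) ∧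
    Tendsto (fun z => ‖f z‖) (𝓝[D ∩ U] a) atTop

theorem HasHolomorphicBlowUpAt.exists_one_le_norm {D : Set E} {a : E}
    (h : HasHolomorphicBlowUpAt D a) :
    ∃ V : Set E, IsOpen V ∧ a ∈ V ∧ ∃ f : E → ℂ, DifferentiableOn ℂ f (D ∩ V) ∧
      (∀ z ∈ D ∩ V, 1 ≤ ‖f z‖) ∧ Tendsto (fun z => ‖f z‖) (𝓝[D ∩ V] a) atTop := by
  obtain ⟨U, hU, haU, f, hf, hfa⟩ := h
  obtain ⟨W, hWf, hW, haW⟩ : ∃ W ⊆ {z | z ∈ D ∩ U → 1 ≤ ‖f z‖}, IsOpen W ∧ a ∈ W :=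
    eventually_nhds_iff.1 (eventually_nhdsWithin_iff.1 (hfa.eventually_ge_atTop 1))
  refine ⟨W ∩ U, hW.inter hU, ⟨haW, haU⟩, f, hf.mono fun z hz => ⟨hz.1, hz.2.2⟩,
    fun z hz => hWf hz.2.1 ⟨hz.1, hz.2.2⟩, hfa.mono_left (nhdsWithin_mono a ?_)⟩
  exact fun z hz => ⟨hz.1, hz.2.2⟩

theorem eventually_mem_frontier_of_tendstoLocallyUniformlyOn {ι : Type*} {l : Filter ι}
    [l.NeBot] {D : Set E} {Ω : Set ℂ} {ψ : ι → ℂ → E} {φ : ℂ → E} {ξ : ℂ} (hD : IsOpen D)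
    (hΩ : IsOpen Ω) (hψ : ∀ j, DifferentiableOn ℂ (ψ j) Ω ∧ MapsTo (ψ j) Ω D)
    (hconv : TendstoLocallyUniformlyOn ψ φ l Ω) (hξ : ξ ∈ Ω)
    (hblow : HasHolomorphicBlowUpAt D (φ ξ)) :
    ∀ᶠ η in 𝓝 ξ, φ η ∈ frontier D := by
  obtain ⟨V, hV, haV, f, hf, hf₁, hfa⟩ := hblow.exists_one_le_norm
  have hφ : ContinuousOn φ Ω :=
    hconv.continuousOn (Eventually.of_forall fun j => (hψ j).1.continuousOn).frequently
  obtain ⟨r, hr, hrsub⟩ : ∃ r > 0, closedBall ξ r ⊆ Ω ∩ φ ⁻¹' V :=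
    nhds_basis_closedBall.mem_iff.1 <| inter_mem (hΩ.mem_nhds hξ) <|
      (hφ.continuousAt (hΩ.mem_nhds hξ)).preimage_mem_nhds (hV.mem_nhds haV)
  have hK : closedBall ξ r ⊆ Ω := fun x hx => (hrsub hx).1
  have hmaps : ∀ᶠ j in l, MapsTo (ψ j) (closedBall ξ r) (D ∩ V) := by
    filter_upwards [((tendstoLocallyUniformlyOn_iff_forall_isCompact hΩ).1 hconv _ hK
      (isCompact_closedBall ξ r)).eventually_mapsTo
      ((isCompact_closedBall ξ r).image_of_continuousOn (hφ.mono hK)) hV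
      fun x hx => (hrsub hx).2] with j hj
    exact fun z hz => ⟨(hψ j).2 (hK hz), hj hz⟩
  have hF : ∀ᶠ j in l, AnalyticOnNhd ℂ (fun z => f (ψ j z)) (closedBall ξ r) ∧
      ∀ z ∈ closedBall ξ r, 1 ≤ ‖f (ψ j z)‖ := by
    filter_upwards [hmaps] with j hj
    have hS : IsOpen (Ω ∩ ψ j ⁻¹' (D ∩ V)) :=
      (hψ j).1.continuousOn.isOpen_inter_preimage hΩ (hD.inter hV)
    refine ⟨fun z hz => ?_, fun z hz => hf₁ _ (hj hz)⟩
    exact (hf.comp ((hψ j).1.mono inter_subset_left) fun _ hx => hx.2).analyticOnNhd hS z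
      ⟨hK hz, hj hz⟩
  have hFξ : Tendsto (fun j => ‖f (ψ j ξ)‖) l atTop :=
    hfa.comp <| tendsto_nhdsWithin_iff.2
      ⟨hconv.tendsto_at hξ, hmaps.mono fun j hj => hj (mem_closedBall_self hr.le)⟩
  filter_upwards [ball_mem_nhds ξ hr] with η hη
  have hηΩ : η ∈ Ω := hK (ball_subset_closedBall hη)
  rw [hD.frontier_eq]
  refine ⟨mem_closure_of_tendsto (hconv.tendsto_at hηΩ) (.of_forall fun j => (hψ j).2 hηΩ),
    fun hηD => ?_⟩
  have hfη : ContinuousAt f (φ η) := hf.continuousOn.continuousAt <|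
    (hD.inter hV).mem_nhds ⟨hηD, (hrsub (ball_subset_closedBall hη)).2⟩
  exact not_tendsto_atTop_of_tendsto_nhds (hfη.tendsto.comp (hconv.tendsto_at hηΩ)).norm
    (tendsto_norm_atTop_of_mem_ball hF hFξ hη)

end BlowUp

theorem limit_map_into_boundary_general
    {n : ℕ} (D : Set (EuclideanSpace ℂ (Fin n)))
    (hD : IsOpen D ∧ IsConnected D)
    (h : ∀ a ∈ frontier D, ∃ U : Set (EuclideanSpace ℂ (Fin n)), IsOpen U ∧ a ∈ U ∧
      ∃ f : EuclideanSpace ℂ (Fin n) → ℂ, DifferentiableOn ℂ f (D ∩ U) ∧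
        Filter.Tendsto (fun z => ‖f z‖) (𝓝[D ∩ U] a) atTop)
    (ψ : ℕ → ℂ → EuclideanSpace ℂ (Fin n))
    (hψ : ∀ j, DifferentiableOn ℂ (ψ j) (ball (0 : ℂ) 1) ∧
      MapsTo (ψ j) (ball (0 : ℂ) 1) D)
    (ψlim : ℂ → EuclideanSpace ℂ (Fin n))
    (hconv : TendstoLocallyUniformlyOn ψ ψlim atTop (ball (0 : ℂ) 1))
    (ζ : ℂ) (hζ : ζ ∈ ball (0 : ℂ) 1) (hbdry : ψlim ζ ∈ frontier D) :
    ∀ ξ ∈ ball (0 : ℂ) 1, ψlim ξ ∈ frontier D :=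
  (convex_ball (0 : ℂ) 1).isPreconnected.mapsTo_of_eventually_mem isOpen_ball
    (hconv.continuousOn (Eventually.of_forall fun j => (hψ j).1.continuousOn).frequently)
    isClosed_frontier
    (fun _ hξ hfr => eventually_mem_frontier_of_tendstoLocallyUniformlyOn hD.1 isOpen_ball hψ
      hconv hξ (h _ hfr))
    hζ hbdry

/-- Let `D ⊆ ℂⁿ` be a bounded domain such that every boundary point `a` has a neighborhood
`U_a` and a holomorphic function `f_a` on `D ∩ U_a` with `lim_{z → a} |f_a(z)| = ∞`. If
holomorphic maps `ψ_j : 𝔻 → D` converge locally uniformly on `𝔻` to `ψ`, and `ψ(ζ) ∈ ∂D` for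
some `ζ ∈ 𝔻`, then `ψ(𝔻) ⊆ ∂D`. -/
theorem limit_map_into_boundary
    {n : ℕ} (D : Set (EuclideanSpace ℂ (Fin n)))
    (hD : IsOpen D ∧ IsConnected D) (hbd : Bornology.IsBounded D)
    (h : ∀ a ∈ frontier D, ∃ U : Set (EuclideanSpace ℂ (Fin n)), IsOpen U ∧ a ∈ U ∧
      ∃ f : EuclideanSpace ℂ (Fin n) → ℂ, DifferentiableOn ℂ f (D ∩ U) ∧
        Filter.Tendsto (fun z => ‖f z‖) (𝓝[D ∩ U] a) atTop)
    (ψ : ℕ → ℂ → EuclideanSpace ℂ (Fin n))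
    (hψ : ∀ j, DifferentiableOn ℂ (ψ j) (ball (0 : ℂ) 1) ∧
      MapsTo (ψ j) (ball (0 : ℂ) 1) D)
    (ψlim : ℂ → EuclideanSpace ℂ (Fin n))
    (hconv : TendstoLocallyUniformlyOn ψ ψlim atTop (ball (0 : ℂ) 1))
    (ζ : ℂ) (hζ : ζ ∈ ball (0 : ℂ) 1) (hbdry : ψlim ζ ∈ frontier D) :
    ∀ ξ ∈ ball (0 : ℂ) 1, ψlim ξ ∈ frontier D :=
  limit_map_into_boundary_general D hD h ψ hψ ψlim hconv ζ hζ hbdry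
end

section
/- Let D ⊂ ℝⁿ be a domain such that for every boundary point a ∈ ∂D there exist a neighborhood U_a of a and a function u_a : D ∩ U_a → ℝ which is convex along segments (i.e. for every segment [x,y] ⊆ D ∩ U_a and t ∈ [0,1], u_a(tx+(1−t)y) ≤ t·u_a(x) + (1−t)·u_a(y)) and satisfies lim_{z→a} u_a(z) = ∞. Then D is convex. -/
/-!
For `x ∈ D`, the set of `z` with `[x, z] ⊆ D` is open, and closed in `D`, by the following: if
`[x, z₁] ⊆ D` and `z` is the midpoint of a segment `[z₁, z₂] ⊆ D`, then `[x, z] ⊆ D`. Otherwise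
the triangle `x z₁ z₂` leaves `D`; a point `a` of the triangle outside `D` farthest from a
suitable point `P` of its plane lies in the relative interior of the triangle, hence on `∂D`, and
every point of the plane near `a` and farther from `P` lies in `D`. Chords of `D` tangent at `a`
to the circle about `P`, pushed outwards, have midpoints tending to `a` and endpoints tending to
points of `D`; convexity of `u_a` along them keeps `u_a` bounded at the midpoints, contradicting
`u_a → ∞` at `a`.
-/

open Filter Set
open scoped Topology RealInnerProductSpace

section

variable {E : Type*} [NormedAddCommGroup E] [NormedSpace ℝ E]

def ConvexAlongSegmentsOn (W : Set E) (u : E → ℝ) : Prop :=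
  ∀ x ∈ W, ∀ y ∈ W, segment ℝ x y ⊆ W →
    ∀ t ∈ Icc (0 : ℝ) 1, u (t • x + (1 - t) • y) ≤ t * u x + (1 - t) * u y

def HasLocalConvexExhaustion (D : Set E) (a : E) : Prop :=
  ∃ U : Set E, IsOpen U ∧ a ∈ U ∧
    ∃ u : E → ℝ, ConvexAlongSegmentsOn (D ∩ U) u ∧ Tendsto u (𝓝[D ∩ U] a) atTop

namespace ConvexAlongSegmentsOn

variable {W : Set E} {u : E → ℝ}

theorem convexOn {C : Set E} (hu : ConvexAlongSegmentsOn W u) (hC : Convex ℝ C) (hCW : C ⊆ W) :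
    ConvexOn ℝ C u := by
  refine ⟨hC, fun x hx y hy s t hs ht hst => ?_⟩
  obtain rfl : t = 1 - s := by linarith
  exact hu x (hCW hx) y (hCW hy) ((hC.segment_subset hx hy).trans hCW) s ⟨hs, by linarith⟩

theorem continuousOn [FiniteDimensional ℝ E] (hu : ConvexAlongSegmentsOn W u) (hW : IsOpen W) :
    ContinuousOn u W := by
  intro x hx
  obtain ⟨ε, hε, hball⟩ := Metric.isOpen_iff.mp hW x hx
  exact ((hu.convexOn (convex_ball x ε) hball).continuousOn Metric.isOpen_ball x
    (Metric.mem_ball_self hε)).mono_of_mem_nhdsWithin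
    (mem_nhdsWithin_of_mem_nhds (Metric.ball_mem_nhds x hε))

theorem midpoint_le (hu : ConvexAlongSegmentsOn W u) {x y : E} (hseg : segment ℝ x y ⊆ W) :
    u (midpoint ℝ x y) ≤ (u x + u y) / 2 := by
  have := hu x (hseg (left_mem_segment ℝ x y)) y (hseg (right_mem_segment ℝ x y)) hseg 2⁻¹
    ⟨by norm_num, by norm_num⟩
  rw [midpoint_eq_smul_add, smul_add]
  norm_num at this ⊢
  linarith

theorem not_tendsto_atTop [FiniteDimensional ℝ E] (hu : ConvexAlongSegmentsOn W u)
    (hW : IsOpen W) {ι : Type*} {l : Filter ι} [l.NeBot] {p q : ι → E} {p₀ q₀ a : E}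
    (hp₀ : p₀ ∈ W) (hq₀ : q₀ ∈ W) (hp : Tendsto p l (𝓝 p₀)) (hq : Tendsto q l (𝓝 q₀))
    (hseg : ∀ᶠ i in l, segment ℝ (p i) (q i) ⊆ W)
    (hmid : Tendsto (fun i => midpoint ℝ (p i) (q i)) l (𝓝[W] a)) :
    ¬ Tendsto u (𝓝[W] a) atTop := by
  intro hblow
  have hcont := hu.continuousOn hW
  have hup : ∀ᶠ i in l, u (p i) < u p₀ + 1 :=
    ((hcont.continuousAt (hW.mem_nhds hp₀)).tendsto.comp hp).eventually
      (eventually_lt_nhds (lt_add_one _))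
  have huq : ∀ᶠ i in l, u (q i) < u q₀ + 1 :=
    ((hcont.continuousAt (hW.mem_nhds hq₀)).tendsto.comp hq).eventually
      (eventually_lt_nhds (lt_add_one _))
  have hlarge := (hblow.comp hmid).eventually_gt_atTop ((u p₀ + 1 + (u q₀ + 1)) / 2)
  obtain ⟨i, hpi, hqi, hsegi, hi⟩ := (hup.and (huq.and (hseg.and hlarge))).exists
  have := hu.midpoint_le hsegi
  simp only [Function.comp_apply] at hi
  linarith

end ConvexAlongSegmentsOn

section InnerProductSpace

variable {F : Type*} [NormedAddCommGroup F] [InnerProductSpace ℝ F]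

theorem exists_norm_eq_inner_eq_zero (hF : 2 ≤ Module.finrank ℝ F) (w : F) {r : ℝ} (hr : 0 ≤ r) :
    ∃ v : F, ‖v‖ = r ∧ ⟪v, w⟫ = 0 := by
  have : FiniteDimensional ℝ F := Module.finite_of_finrank_pos (by omega)
  have hrange := (LinearMap.range (innerₛₗ ℝ w)).finrank_le
  rw [Module.finrank_self] at hrange
  have hker : 0 < Module.finrank ℝ (LinearMap.ker (innerₛₗ ℝ w)) := by
    have := LinearMap.finrank_range_add_finrank_ker (innerₛₗ ℝ w)
    omega
  obtain ⟨⟨v, hv⟩, hv0⟩ := Module.finrank_pos_iff_exists_ne_zero.mp hker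
  have hv' : ‖v‖ ≠ 0 := by simpa using hv0
  refine ⟨(r / ‖v‖) • v, ?_, ?_⟩
  · rw [norm_smul, Real.norm_eq_abs, abs_of_nonneg (by positivity), div_mul_cancel₀ _ hv']
  · rw [real_inner_smul_left, real_inner_comm, show ⟪w, v⟫ = 0 from hv, mul_zero]

theorem dist_lt_dist_of_inner_lt_inner {a P p : F} (h : ⟪a - P, a⟫ < ⟪a - P, p⟫) :
    dist a P < dist p P := by
  have hinner : ⟪a - P, p - P⟫ = ⟪a - P, p⟫ - ⟪a - P, a⟫ + ‖a - P‖ ^ 2 := by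
    rw [← real_inner_self_eq_norm_sq, ← inner_sub_right, ← inner_add_right]
    congr 1; abel
  have := real_inner_le_norm (a - P) (p - P)
  rw [dist_eq_norm, dist_eq_norm]
  nlinarith [norm_nonneg (a - P), norm_nonneg (p - P)]

theorem dist_lt_dist_add_smul {a P v : F} (hv : v ≠ 0) (hva : ⟪v, a - P⟫ = 0) {c : ℝ}
    (hc : c ≠ 0) : dist a P < dist (a + c • v) P := by
  have hpyth : ‖a - P + c • v‖ * ‖a - P + c • v‖ = ‖a - P‖ * ‖a - P‖ + ‖c • v‖ * ‖c • v‖ :=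
    norm_add_sq_eq_norm_sq_add_norm_sq_real <| by
      rw [inner_smul_right, real_inner_comm, hva, mul_zero]
  have hcv : 0 < ‖c • v‖ := norm_pos_iff.mpr (smul_ne_zero hc hv)
  rw [dist_eq_norm, dist_eq_norm, show a + c • v - P = a - P + c • v by abel]
  nlinarith [norm_nonneg (a - P + c • v), norm_nonneg (a - P)]

/-- The chords run in a direction tangent at `a` to the sphere about `P`, pushed outwards along
`a - P`. -/
theorem exists_chords_tendsto (hF : 2 ≤ Module.finrank ℝ F) {a P : F} (haP : a ≠ P) {ε : ℝ}
    (hε : 0 < ε) :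
    let S := Metric.ball a ε ∩ {x | dist a P < dist x P}
    ∃ p q : ℝ → F, ∃ p₀ ∈ S, ∃ q₀ ∈ S, Tendsto p (𝓝[>] 0) (𝓝 p₀) ∧
      Tendsto q (𝓝[>] 0) (𝓝 q₀) ∧ (∀ᶠ η in 𝓝[>] 0, segment ℝ (p η) (q η) ⊆ S) ∧
      Tendsto (fun η => midpoint ℝ (p η) (q η)) (𝓝[>] 0) (𝓝 a) := by
  intro S
  obtain ⟨v, hv, hva⟩ := exists_norm_eq_inner_eq_zero hF (a - P) (half_pos hε).le
  set w := a - P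
  have hw : 0 < ‖w‖ := norm_pos_iff.mpr (sub_ne_zero.mpr haP)
  have hwv : ⟪w, v⟫ = 0 := by rw [real_inner_comm, hva]
  set H : Set F := {x | ⟪w, a⟫ < ⟪w, x⟫}
  have hHS : Metric.ball a ε ∩ H ⊆ S := fun x hx => ⟨hx.1, dist_lt_dist_of_inner_lt_inner hx.2⟩
  set g : ℝ → ℝ → F := fun c η => a + η • w + c • v
  have hg_lim : ∀ c, Tendsto (g c) (𝓝[>] 0) (𝓝 (a + c • v)) := by
    intro c
    have : Continuous (g c) := by fun_prop
    simpa [g] using (this.tendsto 0).mono_left nhdsWithin_le_nhds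
  have hg_end : ∀ c : ℝ, |c| = 1 → a + c • v ∈ S := by
    intro c hc
    have hv0 : v ≠ 0 := by rw [← norm_pos_iff, hv]; positivity
    refine ⟨?_, dist_lt_dist_add_smul hv0 hva (by rintro rfl; simp at hc)⟩
    rw [Metric.mem_ball, dist_eq_norm, add_sub_cancel_left, norm_smul, Real.norm_eq_abs, hc, hv]
    linarith
  have hg_mid : (fun η => midpoint ℝ (g (-1) η) (g 1 η)) = fun η => a + η • w := by
    ext1 η
    rw [midpoint_eq_smul_add, invOf_eq_inv]
    module
  have hneg : |(-1 : ℝ)| = 1 := by simp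
  refine ⟨g (-1), g 1, _, hg_end (-1) hneg, _, hg_end 1 abs_one, hg_lim (-1), hg_lim 1, ?_,
    by rw [hg_mid]; simpa [g] using hg_lim 0⟩
  filter_upwards [hg_lim (-1) (Metric.isOpen_ball.mem_nhds (hg_end (-1) hneg).1),
    hg_lim 1 (Metric.isOpen_ball.mem_nhds (hg_end 1 abs_one).1),
    self_mem_nhdsWithin] with η hη₁ hη₂ (hη : 0 < η)
  refine (((convex_ball a ε).inter (convex_halfSpace_gt (innerₛₗ ℝ w).isLinear _)).segment_subset
    ⟨hη₁, ?_⟩ ⟨hη₂, ?_⟩).trans hHS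
  all_goals
    show ⟪w, a⟫ < ⟪w, _⟫
    simp only [g, inner_add_right, inner_smul_right, real_inner_self_eq_norm_sq, hwv]
    nlinarith [mul_pos hη (pow_pos hw 2)]

end InnerProductSpace

section EuclideanPlane

def unitTriangle : Set (EuclideanSpace ℝ (Fin 2)) := {p | 0 ≤ p 0 ∧ 0 ≤ p 1 ∧ p 0 + p 1 ≤ 1}

def openUnitTriangle : Set (EuclideanSpace ℝ (Fin 2)) := {p | 0 < p 0 ∧ 0 < p 1 ∧ p 0 + p 1 < 1}

theorem openUnitTriangle_subset_unitTriangle : openUnitTriangle ⊆ unitTriangle :=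
  fun _ hp => ⟨hp.1.le, hp.2.1.le, hp.2.2.le⟩

theorem isOpen_openUnitTriangle : IsOpen openUnitTriangle := by
  have hc₀ := PiLp.continuous_apply 2 (fun _ : Fin 2 => ℝ) 0
  have hc₁ := PiLp.continuous_apply 2 (fun _ : Fin 2 => ℝ) 1
  exact (isOpen_lt continuous_const hc₀).inter
    ((isOpen_lt continuous_const hc₁).inter (isOpen_lt (hc₀.add hc₁) continuous_const))

theorem EuclideanSpace.dist_sq_fin_two (p q : EuclideanSpace ℝ (Fin 2)) :
    dist p q ^ 2 = (p 0 - q 0) ^ 2 + (p 1 - q 1) ^ 2 := by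
  rw [EuclideanSpace.dist_eq, Real.sq_sqrt (by positivity), Fin.sum_univ_two, Real.dist_eq,
    Real.dist_eq, sq_abs, sq_abs]

theorem isCompact_unitTriangle : IsCompact unitTriangle := by
  have hc₀ := PiLp.continuous_apply 2 (fun _ : Fin 2 => ℝ) 0
  have hc₁ := PiLp.continuous_apply 2 (fun _ : Fin 2 => ℝ) 1
  refine Metric.isCompact_of_isClosed_isBounded ?_
    ((Metric.isBounded_closedBall (x := 0) (r := 2)).subset ?_)
  · exact (isClosed_le continuous_const hc₀).inter
      ((isClosed_le continuous_const hc₁).inter (isClosed_le (hc₀.add hc₁) continuous_const))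
  · rintro p ⟨hp₀, hp₁, hp₀₁⟩
    have := EuclideanSpace.dist_sq_fin_two p 0
    simp only [PiLp.zero_apply, sub_zero] at this
    rw [Metric.mem_closedBall]
    nlinarith [dist_nonneg (x := p) (y := 0)]

/-- The farthest point of `K` from `P = (-1 / b₀, 0)` is off the edge `p 0 = 0`: points of that
edge are at squared distance at most `1 / b₀² + 1` from `P`, while `b` is at squared distance
more than `1 / b₀² + 2`. -/
theorem exists_forall_dist_le_of_subset_unitTriangle {K : Set (EuclideanSpace ℝ (Fin 2))}
    (hK : IsCompact K) (hKT : K ⊆ unitTriangle) {b : EuclideanSpace ℝ (Fin 2)} (hb : b ∈ K)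
    (hb₀ : 0 < b 0) : ∃ a ∈ K, 0 < a 0 ∧ ∃ P, a ≠ P ∧ ∀ p ∈ K, dist p P ≤ dist a P := by
  set P : EuclideanSpace ℝ (Fin 2) := !₂[-(b 0)⁻¹, 0]
  obtain ⟨a, haK, hmax⟩ :=
    hK.exists_isMaxOn ⟨b, hb⟩ (continuous_id.dist continuous_const).continuousOn
  obtain ⟨ha₀, ha₁, ha₀₁⟩ := hKT haK
  have hba : dist b P ^ 2 ≤ dist a P ^ 2 := pow_le_pow_left₀ dist_nonneg (hmax hb) 2
  have hbb := mul_inv_cancel₀ hb₀.ne'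
  have hpos : 0 < a 0 := by
    refine ha₀.lt_of_ne fun h => ?_
    have ha₁' : a 1 ^ 2 ≤ 1 := pow_le_one₀ ha₁ (by linarith)
    simp only [EuclideanSpace.dist_sq_fin_two, P, ← h] at hba
    simp only [Matrix.cons_val_zero, Matrix.cons_val_one, Matrix.cons_val_fin_one, sub_neg_eq_add,
      sub_zero, zero_add] at hba
    nlinarith [sq_nonneg (b 1)]
  refine ⟨a, haK, hpos, P, fun h => ?_, fun p hp => hmax hp⟩
  have : a 0 = -(b 0)⁻¹ := congrArg (· 0) h
  nlinarith [inv_pos.mpr hb₀]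

noncomputable def triangleMap (x y z : E) : EuclideanSpace ℝ (Fin 2) →ᵃ[ℝ] E :=
  ((EuclideanSpace.proj 0).smulRight (y - x) + (EuclideanSpace.proj 1).smulRight (z - x) :
    EuclideanSpace ℝ (Fin 2) →L[ℝ] E).toLinearMap.toAffineMap + AffineMap.const ℝ _ x

theorem triangleMap_apply (x y z : E) (p : EuclideanSpace ℝ (Fin 2)) :
    triangleMap x y z p = x + p 0 • (y - x) + p 1 • (z - x) := by
  rw [add_assoc, add_comm]
  rfl

theorem triangleMap_mem_segment_left (x y z : E) {p : EuclideanSpace ℝ (Fin 2)}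
    (hp : p ∈ unitTriangle) (h : p 1 = 0) : triangleMap x y z p ∈ segment ℝ x y := by
  rw [segment_eq_image']
  exact ⟨p 0, ⟨hp.1, by linarith [hp.2.2]⟩, by rw [triangleMap_apply, h, zero_smul, add_zero]⟩

theorem triangleMap_mem_segment_right (x y z : E) {p : EuclideanSpace ℝ (Fin 2)}
    (hp : p ∈ unitTriangle) (h : p 0 + p 1 = 1) : triangleMap x y z p ∈ segment ℝ y z := by
  refine ⟨p 0, p 1, hp.1, hp.2.1, h, ?_⟩
  rw [triangleMap_apply]
  linear_combination (norm := module) h • x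

end EuclideanPlane

variable [FiniteDimensional ℝ E] {D : Set E}

theorem HasLocalConvexExhaustion.apply_mem_of_forall_dist_lt (hDo : IsOpen D)
    (hD : ∀ b ∈ frontier D, HasLocalConvexExhaustion D b) {F : Type*} [NormedAddCommGroup F]
    [InnerProductSpace ℝ F] (hF : 2 ≤ Module.finrank ℝ F) {Φ : F →ᵃ[ℝ] E} (hΦ : Continuous Φ)
    {O : Set F} (hO : IsOpen O) {a P : F} (haO : a ∈ O) (haP : a ≠ P)
    (hout : ∀ p ∈ O, dist a P < dist p P → Φ p ∈ D) : Φ a ∈ D := by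
  by_contra haD
  have hfr : Φ a ∈ frontier D := by
    obtain ⟨ε, hε, hball⟩ := Metric.isOpen_iff.mp hO a haO
    obtain ⟨p, q, -, -, -, -, -, -, hseg, hmid⟩ := exists_chords_tendsto hF haP hε
    rw [hDo.frontier_eq]
    refine ⟨mem_closure_of_tendsto ((hΦ.tendsto a).comp hmid) ?_, haD⟩
    filter_upwards [hseg] with η hη
    have hS := hη (midpoint_mem_segment (p η) (q η))
    exact hout _ (hball hS.1) hS.2
  obtain ⟨U, hU, haU, u, hu, hblow⟩ := hD _ hfr
  obtain ⟨ε, hε, hball⟩ := Metric.isOpen_iff.mp (hO.inter (hU.preimage hΦ)) a ⟨haO, haU⟩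
  have hgood : ∀ x ∈ Metric.ball a ε ∩ {x | dist a P < dist x P}, Φ x ∈ D ∩ U :=
    fun x hx => ⟨hout x (hball hx.1).1 hx.2, (hball hx.1).2⟩
  obtain ⟨p, q, p₀, hp₀, q₀, hq₀, hp, hq, hseg, hmid⟩ := exists_chords_tendsto hF haP hε
  have hseg' : ∀ᶠ η in 𝓝[>] 0, segment ℝ (Φ (p η)) (Φ (q η)) ⊆ D ∩ U := by
    filter_upwards [hseg] with η hη
    rw [← image_segment, image_subset_iff]
    exact fun x hx => hgood x (hη hx)
  refine hu.not_tendsto_atTop (hDo.inter hU) (hgood p₀ hp₀) (hgood q₀ hq₀)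
    ((hΦ.tendsto _).comp hp) ((hΦ.tendsto _).comp hq) hseg' ?_ hblow
  simp only [Function.comp_apply, ← Φ.map_midpoint]
  refine tendsto_nhdsWithin_iff.mpr ⟨(hΦ.tendsto a).comp hmid, ?_⟩
  filter_upwards [hseg'] with η hη
  exact Φ.map_midpoint _ _ ▸ hη (midpoint_mem_segment _ _)

theorem segment_subset_of_segment_subset_of_mem_ball (hDo : IsOpen D)
    (hD : ∀ b ∈ frontier D, HasLocalConvexExhaustion D b) {x z₁ z : E} {ε : ℝ}
    (hxz₁ : segment ℝ x z₁ ⊆ D) (hball : Metric.ball z ε ⊆ D) (hz₁ : z₁ ∈ Metric.ball z ε) :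
    segment ℝ x z ⊆ D := by
  intro ω hω
  by_contra hωD
  rw [segment_eq_image'] at hω
  obtain ⟨τ, ⟨hτ₀, hτ₁⟩, rfl⟩ := hω
  have hτ : 0 < τ := hτ₀.lt_of_ne <| by
    rintro rfl
    exact hωD (by simpa using hxz₁ (left_mem_segment ℝ x z₁))
  set z₂ := z + (z - z₁)
  have hz₂ : z₂ ∈ Metric.ball z ε := by
    rwa [Metric.mem_ball, dist_eq_norm, add_sub_cancel_left, ← dist_eq_norm']
  set Φ := triangleMap x z₁ z₂
  have hedge : ∀ p ∈ unitTriangle, p 1 = 0 ∨ p 0 + p 1 = 1 → Φ p ∈ D := by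
    rintro p hp (h | h)
    · exact hxz₁ (triangleMap_mem_segment_left x z₁ z₂ hp h)
    · exact hball ((convex_ball z ε).segment_subset hz₁ hz₂
        (triangleMap_mem_segment_right x z₁ z₂ hp h))
  set K := unitTriangle ∩ Φ ⁻¹' Dᶜ
  have hK : IsCompact K := isCompact_unitTriangle.inter_right
    (hDo.isClosed_compl.preimage Φ.continuous_of_finiteDimensional)
  set b : EuclideanSpace ℝ (Fin 2) := !₂[τ / 2, τ / 2]
  have hb₀ : b 0 = τ / 2 := rfl
  have hb₁ : b 1 = τ / 2 := rfl
  have hbK : b ∈ K := by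
    refine ⟨⟨by rw [hb₀]; positivity, by rw [hb₁]; positivity, by rw [hb₀, hb₁]; linarith⟩, ?_⟩
    rw [mem_preimage, triangleMap_apply, hb₀, hb₁]
    convert hωD using 2
    module
  obtain ⟨a, ⟨haT, haD⟩, ha₀, P, haP, hmax⟩ :=
    exists_forall_dist_le_of_subset_unitTriangle hK inter_subset_left hbK (by rw [hb₀]; positivity)
  refine haD (HasLocalConvexExhaustion.apply_mem_of_forall_dist_lt hDo hD (by simp)
    Φ.continuous_of_finiteDimensional isOpen_openUnitTriangle ⟨ha₀, ?_, ?_⟩ haP fun p hp hfar => ?_)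
  · exact haT.2.1.lt_of_ne fun h => haD (hedge a haT (Or.inl h.symm))
  · exact haT.2.2.lt_of_ne fun h => haD (hedge a haT (Or.inr h))
  · by_contra hpD
    exact (hmax p ⟨openUnitTriangle_subset_unitTriangle hp, hpD⟩).not_gt hfar

end

/-- Let `D ⊆ ℝⁿ` be a domain such that every boundary point `a` has a neighborhood `U_a` and a
function `u_a : D ∩ U_a → ℝ`, convex along every segment contained in `D ∩ U_a`, with
`lim_{z → a} u_a(z) = ∞`. Then `D` is convex. -/
theorem convex_of_local_convex_exhaustion
    {n : ℕ} (D : Set (EuclideanSpace ℝ (Fin n)))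
    (hD : IsOpen D ∧ IsConnected D)
    (h : ∀ a ∈ frontier D, ∃ U : Set (EuclideanSpace ℝ (Fin n)), IsOpen U ∧ a ∈ U ∧
      ∃ u : EuclideanSpace ℝ (Fin n) → ℝ,
        (∀ x ∈ D ∩ U, ∀ y ∈ D ∩ U, segment ℝ x y ⊆ D ∩ U →
          ∀ t : ℝ, t ∈ Set.Icc (0 : ℝ) 1 →
            u (t • x + (1 - t) • y) ≤ t * u x + (1 - t) * u y) ∧
        Filter.Tendsto u (𝓝[D ∩ U] a) atTop) :
    Convex ℝ D := by
  obtain ⟨hDo, hDconn⟩ := hD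
  rw [convex_iff_segment_subset]
  intro x hx y hy
  set S := {z | segment ℝ x z ⊆ D}
  have hSopen : IsOpen S := by
    refine Metric.isOpen_iff.mpr fun z hz => ?_
    obtain ⟨ε, hε, hball⟩ := Metric.isOpen_iff.mp hDo z (hz (right_mem_segment ℝ x z))
    refine ⟨ε / 2, half_pos hε, fun z' hz' => ?_⟩
    have hball' : Metric.ball z' (ε / 2) ⊆ D :=
      (Metric.ball_subset_ball' (by rw [Metric.mem_ball] at hz'; linarith)).trans hball
    exact segment_subset_of_segment_subset_of_mem_ball hDo h hz hball' (Metric.mem_ball_comm.mp hz')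
  have hSclosed : closure S ∩ D ⊆ S := by
    rintro z ⟨hzS, hzD⟩
    obtain ⟨ε, hε, hball⟩ := Metric.isOpen_iff.mp hDo z hzD
    obtain ⟨z₁, hz₁S, hz₁⟩ := Metric.mem_closure_iff.mp hzS ε hε
    exact segment_subset_of_segment_subset_of_mem_ball hDo h hz₁S hball (Metric.mem_ball'.mpr hz₁)
  have hxS : x ∈ S := by simpa [S, segment_same] using hx
  exact hDconn.isPreconnected.subset_of_closure_inter_subset hSopen ⟨x, hx, hxS⟩ hSclosed hy
end

section
/- If D ⊂ ℝⁿ is a domain which is not convex, then there exist points a, b ∈ D such that the midpoint c = (a+b)/2 lies on ∂D while [a,b] \ {c} ⊂ D. -/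
/-!
Pick `p, q ∈ D` with `[p, q] ⊄ D`. The set of points of `D` visible from `p` is open, so by
connectedness some `x ∈ D` is a limit of visible points without being visible itself. Walking from
a visible point `e` close to `x` towards `x` until visibility first fails gives `z ∈ D` with
`[p, z] ⊄ D`, while the triangle `p z e` minus its side `[p, z]` lies in `D`.

In the plane of this triangle, with `p, z` at `(0, 0), (1, 0)` and `e` above the first axis,
maximise `v₂ + μ v₁²` over the compact set of points of the box `[0, 1] × [-1, 0]` outside `D`.
For small `μ > 0` the maximiser `c` lies on neither the vertical sides nor the bottom of the box,
so it is a local maximiser over all of `Dᶜ`. The tangent at `c` to the strictly concave level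
curve through `c` therefore meets `Dᶜ` near `c` only at `c`, and a short chord of it centred
at `c` is the required segment.
-/

open Set Filter Topology

section Visibility

variable {E : Type*} [AddCommGroup E] [Module ℝ E]

def visibleFrom (D : Set E) (p : E) : Set E := {x | segment ℝ p x ⊆ D}

variable {D : Set E} {p x : E}

theorem mem_visibleFrom_comm : x ∈ visibleFrom D p ↔ p ∈ visibleFrom D x := by
  simp only [visibleFrom, mem_ofPred_eq, segment_symm]

theorem mem_visibleFrom_self : p ∈ visibleFrom D p ↔ p ∈ D := by
  simp [visibleFrom]

theorem add_smul_sub_add_smul_sub_mem_of_lineMap_mem_visibleFrom {e z : E}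
    (hvis : ∀ s ∈ Ico (0 : ℝ) 1, AffineMap.lineMap e z s ∈ visibleFrom D p)
    {x y : ℝ} (hx : 0 ≤ x) (hy : 0 < y) (hxy : x + y ≤ 1) :
    p + x • (z - p) + y • (e - p) ∈ D := by
  have hxy0 : 0 < x + y := by linarith
  apply hvis (x / (x + y)) ⟨by positivity, (div_lt_one hxy0).2 (by linarith)⟩
  rw [segment_eq_image_lineMap]
  refine ⟨x + y, ⟨hxy0.le, hxy⟩, ?_⟩
  simp only [AffineMap.lineMap_apply_module']
  rw [smul_sub, smul_add, smul_smul, mul_div_cancel₀ _ hxy0.ne']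
  module

end Visibility

section TopologicalVectorSpace

variable {E : Type*} [AddCommGroup E] [Module ℝ E] [TopologicalSpace E] [IsTopologicalAddGroup E]
  [ContinuousSMul ℝ E]

theorem isOpen_visibleFrom {D : Set E} (hD : IsOpen D) (p : E) : IsOpen (visibleFrom D p) := by
  refine isOpen_iff_mem_nhds.2 fun x hx => ?_
  have hcont : Continuous fun q : E × ℝ => AffineMap.lineMap p q.1 q.2 := by
    simp only [AffineMap.lineMap_apply_module]; fun_prop
  have hnear : ∀ θ ∈ Icc (0 : ℝ) 1, ∀ᶠ q : E × ℝ in 𝓝 (x, θ), AffineMap.lineMap p q.1 q.2 ∈ D :=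
    fun θ hθ => hcont.continuousAt.preimage_mem_nhds
      (hD.mem_nhds (hx (segment_eq_image_lineMap ℝ p x ▸ mem_image_of_mem _ hθ)))
  filter_upwards [isCompact_Icc.eventually_forall_of_forall_eventually
    (P := fun y θ => AffineMap.lineMap p y θ ∈ D) hnear] with y hy
  rw [visibleFrom, mem_ofPred_eq, segment_eq_image_lineMap]
  rintro _ ⟨θ, hθ, rfl⟩
  exact hy θ hθ

theorem exists_notMem_visibleFrom_mem_closure {D : Set E} (hD : IsOpen D)
    (hDc : IsPreconnected D) {p q : E} (hp : p ∈ D) (hq : q ∈ D) (hpq : q ∉ visibleFrom D p) :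
    ∃ x ∈ D, x ∈ closure (visibleFrom D p) ∧ x ∉ visibleFrom D p := by
  by_contra! h
  exact hpq (hDc.subset_of_closure_inter_subset (isOpen_visibleFrom hD p)
    ⟨p, hp, mem_visibleFrom_self.2 hp⟩ (fun x ⟨hcl, hx⟩ => h x hx hcl) hq)

theorem exists_mem_segment_notMem_and_lineMap_mem {V : Set E} (hV : IsOpen V) {e x : E}
    (he : e ∈ V) (hx : x ∉ V) :
    ∃ z ∈ segment ℝ e x, z ∉ V ∧ ∀ s ∈ Ico (0 : ℝ) 1, AffineMap.lineMap e z s ∈ V := by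
  set S := Icc (0 : ℝ) 1 ∩ AffineMap.lineMap e x ⁻¹' Vᶜ
  have hS : IsClosed S :=
    isClosed_Icc.inter (hV.isClosed_compl.preimage AffineMap.lineMap_continuous)
  have hSbdd : BddBelow S := ⟨0, fun s hs => hs.1.1⟩
  obtain ⟨⟨hs₀0, hs₀1⟩, hs₀V⟩ := hS.csInf_mem ⟨1, ⟨zero_le_one, le_rfl⟩, by simpa using hx⟩ hSbdd
  have hs₀pos : 0 < sInf S := hs₀0.lt_of_ne fun h => hs₀V (by simpa [← h] using he)
  refine ⟨_, segment_eq_image_lineMap ℝ e x ▸ mem_image_of_mem _ ⟨hs₀0, hs₀1⟩, hs₀V,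
    fun s hs => ?_⟩
  rw [AffineMap.lineMap_lineMap_right]
  by_contra hsV
  have := csInf_le hSbdd ⟨⟨by have := hs.1; positivity, by nlinarith [hs.2]⟩, hsV⟩
  nlinarith [hs.2]

theorem exists_triangle_of_not_convex {D : Set E} (hD : IsOpen D) (hDc : IsPreconnected D)
    (hnc : ¬ Convex ℝ D) :
    ∃ p ∈ D, ∃ z ∈ D, ∃ e : E, ¬ segment ℝ p z ⊆ D ∧
      ∀ x y : ℝ, 0 ≤ x → 0 < y → x + y ≤ 1 → p + x • (z - p) + y • (e - p) ∈ D := by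
  obtain ⟨p, hp, q, hq, hpq⟩ : ∃ p ∈ D, ∃ q ∈ D, ¬ segment ℝ p q ⊆ D := by
    simpa [convex_iff_segment_subset] using hnc
  obtain ⟨x, hx, hxcl, hxV⟩ := exists_notMem_visibleFrom_mem_closure hD hDc hp hq hpq
  obtain ⟨e, hex, hep⟩ := mem_closure_iff.1 hxcl _ (isOpen_visibleFrom hD x)
    (mem_visibleFrom_self.2 hx)
  obtain ⟨z, hz, hzV, hvis⟩ :=
    exists_mem_segment_notMem_and_lineMap_mem (isOpen_visibleFrom hD p) hep hxV
  have hzD : z ∈ D := mem_visibleFrom_comm.1 hex (segment_symm ℝ e x ▸ hz)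
  exact ⟨p, hp, z, hzD, e, hzV, fun x y hx hy hxy =>
    add_smul_sub_add_smul_sub_mem_of_lineMap_mem_visibleFrom hvis hx hy hxy⟩

theorem tendsto_add_smul_nhds_zero (c w : E) :
    Tendsto (fun t : ℝ => c + t • w) (𝓝 0) (𝓝 c) :=
  (by fun_prop : Continuous fun t : ℝ => c + t • w).tendsto' 0 c (by simp)

theorem eventually_add_smul_mem_of_isLocalMaxOn_compl {D : Set E} {ψ : E → ℝ} {c w : E}
    (hmax : IsLocalMaxOn ψ Dᶜ c) (hw : ∀ t : ℝ, t ≠ 0 → ψ c < ψ (c + t • w)) :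
    ∀ᶠ t in 𝓝[≠] (0 : ℝ), c + t • w ∈ D := by
  filter_upwards [eventually_nhdsWithin_of_eventually_nhds
    ((tendsto_add_smul_nhds_zero c w).eventually (eventually_nhdsWithin_iff.1 hmax)),
    self_mem_nhdsWithin] with t ht ht0
  by_contra h
  exact (ht h).not_gt (hw t ht0)

theorem exists_segment_midpoint_mem_frontier {D : Set E} {c w : E} (hc : c ∉ D)
    (h : ∀ᶠ t in 𝓝[≠] (0 : ℝ), c + t • w ∈ D) :
    ∃ a ∈ D, ∃ b ∈ D, midpoint ℝ a b ∈ frontier D ∧ segment ℝ a b \ {midpoint ℝ a b} ⊆ D := by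
  obtain ⟨ε, hε, hball⟩ := Metric.eventually_nhds_iff.1 (eventually_nhdsWithin_iff.1 h)
  have hmem : ∀ t : ℝ, t ≠ 0 → |t| < ε → c + t • w ∈ D := fun t h0 ht =>
    hball (by simpa using ht) h0
  obtain ⟨r, hr, hrε⟩ : ∃ r, 0 < r ∧ r < ε := ⟨ε / 2, half_pos hε, half_lt_self hε⟩
  have hmid : midpoint ℝ (c + (-r) • w) (c + r • w) = c := by
    rw [midpoint_eq_smul_add, invOf_eq_inv]; module
  refine ⟨c + (-r) • w, hmem (-r) (by linarith) (by rw [abs_neg, abs_of_pos hr]; linarith),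
    c + r • w, hmem r hr.ne' (by rw [abs_of_pos hr]; linarith), ?_, ?_⟩
  · rw [hmid]
    exact ⟨mem_closure_of_tendsto
      ((tendsto_add_smul_nhds_zero c w).mono_left nhdsWithin_le_nhds) h,
      fun hint => hc (interior_subset hint)⟩
  · rw [hmid, segment_eq_image]
    rintro _ ⟨⟨θ, hθ, rfl⟩, hne⟩
    have hpt : (1 - θ) • (c + (-r) • w) + θ • (c + r • w) = c + ((2 * θ - 1) * r) • w := by
      module
    dsimp only at hne ⊢
    rw [hpt] at hne ⊢
    refine hmem _ (fun h0 => hne (by rw [h0, zero_smul, add_zero]; rfl)) ?_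
    have : |2 * θ - 1| ≤ 1 := abs_le.2 ⟨by linarith [hθ.1], by linarith [hθ.2]⟩
    rw [abs_mul, abs_of_pos hr]
    nlinarith

end TopologicalVectorSpace

theorem exists_isLocalMaxOn_compl_of_triangle {U : Set (ℝ × ℝ)} (hU : IsOpen U) {k μ : ℝ}
    (hk : k ∈ Icc (0 : ℝ) 1) (hkU : (k, 0) ∉ U) (hμ : 0 ≤ μ) (hμ1 : μ < 1)
    (hsides : ∀ y ∈ Icc (-μ) 0, (0, y) ∈ U ∧ (1, y) ∈ U)
    (htri : ∀ x y : ℝ, 0 ≤ x → 0 < y → x + y ≤ 1 → (x, y) ∈ U) :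
    ∃ c ∉ U, IsLocalMaxOn (fun v : ℝ × ℝ => v.2 + μ * v.1 ^ 2) Uᶜ c := by
  set K : Set (ℝ × ℝ) := Icc 0 1 ×ˢ Icc (-1) 0
  have hkK : ((k, 0) : ℝ × ℝ) ∈ K \ U := ⟨⟨hk, by norm_num⟩, hkU⟩
  obtain ⟨c, ⟨⟨⟨hc0, hc1⟩, -, hc2⟩, hcU⟩, hmax⟩ :=
    ((isCompact_Icc.prod isCompact_Icc).diff hU).exists_isMaxOn ⟨_, hkK⟩
      (by fun_prop : Continuous fun v : ℝ × ℝ => v.2 + μ * v.1 ^ 2).continuousOn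
  have hlow : -μ ≤ c.2 := by
    have : (0 : ℝ) + μ * k ^ 2 ≤ c.2 + μ * c.1 ^ 2 := hmax hkK
    nlinarith [mul_nonneg hμ (sq_nonneg k),
      mul_le_mul_of_nonneg_left (pow_le_one₀ (n := 2) hc0 hc1) hμ]
  have hc0' : 0 < c.1 :=
    hc0.lt_of_ne fun h => hcU (by simpa [h] using (hsides c.2 ⟨hlow, hc2⟩).1)
  have hc1' : c.1 < 1 :=
    hc1.lt_of_ne fun h => hcU (by simpa [← h] using (hsides c.2 ⟨hlow, hc2⟩).2)
  refine ⟨c, hcU, ?_⟩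
  have hO : {v : ℝ × ℝ | 0 < v.1 ∧ v.1 < 1 ∧ -1 < v.2 ∧ v.1 + v.2 < 1} ∈ 𝓝 c := by
    refine IsOpen.mem_nhds ?_ ⟨hc0', hc1', by linarith, by linarith⟩
    simp only [ofPred_and]
    exact (isOpen_lt continuous_const continuous_fst).inter
      ((isOpen_lt continuous_fst continuous_const).inter
        ((isOpen_lt continuous_const continuous_snd).inter
          (isOpen_lt (continuous_fst.add continuous_snd) continuous_const)))
  filter_upwards [inter_mem_nhdsWithin Uᶜ hO] with v ⟨hvU, hv0, hv1, hvb, hvs⟩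
  refine hmax ⟨⟨⟨hv0.le, hv1.le⟩, hvb.le, ?_⟩, hvU⟩
  by_contra! hpos
  exact hvU (htri v.1 v.2 hv0.le hpos hvs.le)

theorem exists_eventually_add_smul_mem_of_triangle {U : Set (ℝ × ℝ)} (hU : IsOpen U) {k : ℝ}
    (hk : k ∈ Icc (0 : ℝ) 1) (hkU : (k, 0) ∉ U) (h0 : ((0 : ℝ), (0 : ℝ)) ∈ U)
    (h1 : ((1 : ℝ), (0 : ℝ)) ∈ U) (htri : ∀ x y : ℝ, 0 ≤ x → 0 < y → x + y ≤ 1 → (x, y) ∈ U) :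
    ∃ c ∉ U, ∃ w : ℝ × ℝ, ∀ᶠ t in 𝓝[≠] (0 : ℝ), c + t • w ∈ U := by
  have hsides : ∀ᶠ y in 𝓝 (0 : ℝ), ((0 : ℝ), y) ∈ U ∧ ((1 : ℝ), y) ∈ U :=
    (((by fun_prop : Continuous fun y : ℝ => ((0 : ℝ), y)).tendsto 0).eventually_mem
      (hU.mem_nhds h0)).and
    (((by fun_prop : Continuous fun y : ℝ => ((1 : ℝ), y)).tendsto 0).eventually_mem
      (hU.mem_nhds h1))
  obtain ⟨ε, hε, hεU⟩ := (nhds_basis_Icc_pos (0 : ℝ)).eventually_iff.1 hsides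
  set μ := min ε (1 / 2)
  have hμ : 0 < μ := lt_min hε one_half_pos
  obtain ⟨c, hcU, hmax⟩ := exists_isLocalMaxOn_compl_of_triangle hU hk hkU hμ.le
    ((min_le_right _ _).trans_lt one_half_lt_one)
    (fun y hy => hεU ⟨by linarith [hy.1, min_le_left ε (1 / 2)], by linarith [hy.2]⟩) htri
  -- `w` is tangent at `c` to the level parabola of `v ↦ v.2 + μ * v.1 ^ 2`;
  -- along `c + t • w` this function equals its value at `c` plus `μ * t ^ 2`.
  refine ⟨c, hcU, (1, -(2 * μ * c.1)),
    eventually_add_smul_mem_of_isLocalMaxOn_compl hmax fun t ht => ?_⟩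
  simp only [Prod.fst_add, Prod.snd_add, Prod.smul_fst, Prod.smul_snd, smul_eq_mul]
  nlinarith [mul_pos hμ (pow_pos (abs_pos.2 ht) 2), sq_abs t]

/-- If `D ⊆ ℝⁿ` is a non-convex domain, then there are points `a, b ∈ D` whose midpoint
`c = (a+b)/2` lies on `∂D` while `[a,b] \ {c} ⊆ D`. -/
theorem exists_segment_touching_boundary_at_midpoint_of_not_convex
    {n : ℕ} (D : Set (EuclideanSpace ℝ (Fin n)))
    (hD : IsOpen D ∧ IsConnected D) (hnc : ¬ Convex ℝ D) :
    ∃ a ∈ D, ∃ b ∈ D,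
      midpoint ℝ a b ∈ frontier D ∧
      segment ℝ a b \ {midpoint ℝ a b} ⊆ D := by
  obtain ⟨p, hp, z, hz, e, hpz, htri⟩ :=
    exists_triangle_of_not_convex hD.1 hD.2.isPreconnected hnc
  set Φ : ℝ × ℝ → EuclideanSpace ℝ (Fin n) := fun v => p + v.1 • (z - p) + v.2 • (e - p)
  obtain ⟨k, hk, hkD⟩ : ∃ k ∈ Icc (0 : ℝ) 1, Φ (k, 0) ∉ D := by
    simpa [subset_def, segment_eq_image_lineMap, AffineMap.lineMap_apply_module', Φ, add_comm,
      and_assoc] using hpz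
  obtain ⟨c, hc, w, hw⟩ := exists_eventually_add_smul_mem_of_triangle
    (hD.1.preimage (by fun_prop)) hk hkD (by simpa [Φ] using hp) (by simpa [Φ] using hz) htri
  refine exists_segment_midpoint_mem_frontier (w := w.1 • (z - p) + w.2 • (e - p)) hc ?_
  filter_upwards [hw] with t ht
  have hΦ : Φ (c + t • w) = Φ c + t • (w.1 • (z - p) + w.2 • (e - p)) := by
    simp only [Φ, Prod.fst_add, Prod.snd_add, Prod.smul_fst, Prod.smul_snd, smul_eq_mul]
    module
  rwa [← hΦ]
end
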